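/- Let α ∈ ℝ and let ξ₁, ξ₂, μ₁, μ₂ ∈ ℝ with ξ₁ ≠ 0, ξ₂ ≠ 0, ξ₁ + ξ₂ ≠ 0. If (μ₁/ξ₁ − μ₂/ξ₂)² ≤ (1/2) (ξ₁+ξ₂)² |5(ξ₁² + ξ₁ξ₂ + ξ₂²) − 3α|, then |R(ξ₁,ξ₂,μ₁,μ₂)| ≥ (1/2) |ξ₁| |ξ₂| |ξ₁+ξ₂| · |5(ξ₁² + ξ₁ξ₂ + ξ₂²) − 3α|. -/

import Mathlib

/-- The dispersion relation of the fifth order KP-I equation with parameter `α`: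
`ω(ξ,μ) = ξ⁵ − αξ³ + μ²/ξ` (for `ξ ≠ 0`). -/
noncomputable def omega5 (α ξ μ : ℝ) : ℝ := ξ ^ 5 - α * ξ ^ 3 + μ ^ 2 / ξ

/-- The resonance function of the fifth order KP-I equation:
`R(ξ₁,ξ₂,μ₁,μ₂) = ω(ξ₁+ξ₂,μ₁+μ₂) − ω(ξ₁,μ₁) − ω(ξ₂,μ₂)`. -/
noncomputable def resonance5 (α ξ₁ ξ₂ μ₁ μ₂ : ℝ) : ℝ :=
  omega5 α (ξ₁ + ξ₂) (μ₁ + μ₂) - omega5 α ξ₁ μ₁ - omega5 α ξ₂ μ₂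

/-!
The resonance function splits as `R = ξ₁ξ₂(ξ₁+ξ₂)·B − ξ₁ξ₂/(ξ₁+ξ₂)·(μ₁/ξ₁ − μ₂/ξ₂)²` with
`B = 5(ξ₁² + ξ₁ξ₂ + ξ₂²) − 3α`: the first term comes from `ξ⁵ − αξ³`, the second from `μ²/ξ`.
The hypothesis says exactly that the second term is at most half the first in absolute value,
so the reverse triangle inequality leaves at least half of the first.
-/

lemma resonance5_eq (α ξ₁ ξ₂ μ₁ μ₂ : ℝ) (h₁ : ξ₁ ≠ 0) (h₂ : ξ₂ ≠ 0) (h₁₂ : ξ₁ + ξ₂ ≠ 0) :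
    resonance5 α ξ₁ ξ₂ μ₁ μ₂ =
      ξ₁ * ξ₂ * (ξ₁ + ξ₂) * (5 * (ξ₁ ^ 2 + ξ₁ * ξ₂ + ξ₂ ^ 2) - 3 * α)
        - ξ₁ * ξ₂ / (ξ₁ + ξ₂) * (μ₁ / ξ₁ - μ₂ / ξ₂) ^ 2 := by
  simp only [resonance5, omega5]
  field_simp
  ring

lemma abs_div_mul_sq_le_half_abs_mul {p s d B : ℝ} (hs : s ≠ 0)
    (hd : d ^ 2 ≤ 1 / 2 * s ^ 2 * |B|) :
    |p / s * d ^ 2| ≤ 1 / 2 * |p * s * B| := by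
  rw [abs_mul, abs_div, abs_of_nonneg (sq_nonneg d), div_mul_eq_mul_div,
    div_le_iff₀ (abs_pos.mpr hs)]
  calc |p| * d ^ 2 ≤ |p| * (1 / 2 * s ^ 2 * |B|) := by gcongr
    _ = 1 / 2 * |p * s * B| * |s| := by rw [← sq_abs s]; simp only [abs_mul]; ring

lemma half_abs_le_abs_sub_of_abs_le {a b : ℝ} (h : |b| ≤ 1 / 2 * |a|) :
    1 / 2 * |a| ≤ |a - b| := by
  linarith [abs_sub_abs_le_abs_sub a b]

/-- Lower bound for the resonance function of the fifth order KP-I equation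
in the non-resonant regime. -/
theorem resonance5_lower_bound (α ξ₁ ξ₂ μ₁ μ₂ : ℝ)
    (h₁ : ξ₁ ≠ 0) (h₂ : ξ₂ ≠ 0) (h₁₂ : ξ₁ + ξ₂ ≠ 0)
    (hres : (μ₁ / ξ₁ - μ₂ / ξ₂) ^ 2 ≤
      (1 / 2) * (ξ₁ + ξ₂) ^ 2 * |5 * (ξ₁ ^ 2 + ξ₁ * ξ₂ + ξ₂ ^ 2) - 3 * α|) :
    (1 / 2) * |ξ₁| * |ξ₂| * |ξ₁ + ξ₂| * |5 * (ξ₁ ^ 2 + ξ₁ * ξ₂ + ξ₂ ^ 2) - 3 * α|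
      ≤ |resonance5 α ξ₁ ξ₂ μ₁ μ₂| := by
  rw [resonance5_eq α ξ₁ ξ₂ μ₁ μ₂ h₁ h₂ h₁₂]
  calc 1 / 2 * |ξ₁| * |ξ₂| * |ξ₁ + ξ₂| * |5 * (ξ₁ ^ 2 + ξ₁ * ξ₂ + ξ₂ ^ 2) - 3 * α|
      = 1 / 2 * |ξ₁ * ξ₂ * (ξ₁ + ξ₂) * (5 * (ξ₁ ^ 2 + ξ₁ * ξ₂ + ξ₂ ^ 2) - 3 * α)| := by
        simp only [abs_mul]; ring
    _ ≤ _ := half_abs_le_abs_sub_of_abs_le (abs_div_mul_sq_le_half_abs_mul h₁₂ hres)
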